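/- arXiv:2305.14027 — 6 statements merged into one kernel-verified Lean document; each statement's English description precedes it below -/
import Mathlib

section
/- A 1-dimensional realization of a cycle C on vertices x_1,...,x_k (with edges x_1x_2, ..., x_{k-1}x_k, x_kx_1) satisfying p(x_1) < p(x_2) < ... < p(x_k) is universally rigid; that is, any realization q of C in any Euclidean space R^d with the same edge lengths is congruent to p. -/
/-- Two frameworks (one on the line, one in `ℝ^d`) are equivalent if corresponding
edge lengths agree. -/
def FrameworkEquiv {V : Type*} (G : SimpleGraph V) {d : ℕ}
    (p : V → ℝ) (q : V → EuclideanSpace ℝ (Fin d)) : Prop :=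
  ∀ ⦃u v : V⦄, G.Adj u v → dist (q u) (q v) = dist (p u) (p v)

/-- Two frameworks are congruent if all pairwise distances agree. -/
def FrameworkCongr {V : Type*} {d : ℕ}
    (p : V → ℝ) (q : V → EuclideanSpace ℝ (Fin d)) : Prop :=
  ∀ u v : V, dist (q u) (q v) = dist (p u) (p v)

/-- A 1-dimensional framework `(G,p)` is universally rigid if every equivalent
realization of `G` in any dimension is congruent to it. -/
def UniversallyRigid {V : Type*} (G : SimpleGraph V) (p : V → ℝ) : Prop :=
  ∀ (d : ℕ) (q : V → EuclideanSpace ℝ (Fin d)), FrameworkEquiv G p q → FrameworkCongr p q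

/-- A 1-dimensional configuration is generic if its coordinates are algebraically
independent over `ℚ`. -/
def GenericConfig {V : Type*} (p : V → ℝ) : Prop :=
  AlgebraicIndependent ℚ p

/-- A graph is generically universally rigid in `ℝ¹` if every generic 1-dimensional
realization is universally rigid. -/
def GenUnivRigid {V : Type*} (G : SimpleGraph V) : Prop :=
  ∀ p : V → ℝ, GenericConfig p → UniversallyRigid G p

/-- The cycle graph on `Fin k`: `i` adjacent to `i ± 1` (mod `k`). -/
def cycG (k : ℕ) : SimpleGraph (Fin k) :=
  SimpleGraph.fromRel (fun i j => (j : ℕ) = ((i : ℕ) + 1) % k)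

/-!
Along the path `0, 1, …, k-1` the triangle inequality gives `‖q i - q j‖ ≤ p j - p i` for
`i ≤ j`. The closing edge has length `p (k-1) - p 0`, the total length of the path, so the chain
`q 0, q i, q j, q (k-1)` is tight and each of its three bounds must hold with equality.
-/

section PathInMetricSpace

variable {α : Type*} [PseudoMetricSpace α] {n : ℕ} {f : Fin (n + 1) → α} {g : Fin (n + 1) → ℝ}

theorem dist_le_sub_of_dist_step_le
    (hstep : ∀ i : Fin n, dist (f i.castSucc) (f i.succ) ≤ g i.succ - g i.castSucc)
    {i j : Fin (n + 1)} (hij : i ≤ j) : dist (f i) (f j) ≤ g j - g i := by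
  induction j using Fin.induction with
  | zero => simp [Fin.le_zero_iff.mp hij]
  | succ j ih =>
    rcases hij.lt_or_eq with hlt | rfl
    · calc dist (f i) (f j.succ)
          ≤ dist (f i) (f j.castSucc) + dist (f j.castSucc) (f j.succ) := dist_triangle _ _ _
        _ ≤ (g j.castSucc - g i) + (g j.succ - g j.castSucc) :=
          add_le_add (ih (Fin.le_castSucc_iff.mpr hlt)) (hstep j)
        _ = g j.succ - g i := by ring
    · simp

theorem dist_eq_sub_of_dist_step_le_of_sub_le_dist_ends
    (hstep : ∀ i : Fin n, dist (f i.castSucc) (f i.succ) ≤ g i.succ - g i.castSucc)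
    (hends : g (Fin.last n) - g 0 ≤ dist (f 0) (f (Fin.last n)))
    {i j : Fin (n + 1)} (hij : i ≤ j) : dist (f i) (f j) = g j - g i := by
  have hfirst := dist_le_sub_of_dist_step_le hstep (Fin.zero_le i)
  have hlast := dist_le_sub_of_dist_step_le hstep (Fin.le_last j)
  have hchain := dist_triangle4 (f 0) (f i) (f j) (f (Fin.last n))
  exact le_antisymm (dist_le_sub_of_dist_step_le hstep hij) (by linarith)

end PathInMetricSpace

theorem Real.dist_eq_sub_of_le {x y : ℝ} (h : x ≤ y) : dist x y = y - x := by
  rw [Real.dist_eq, abs_sub_comm, abs_of_nonneg (sub_nonneg.mpr h)]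

theorem FrameworkEquiv.dist_eq_sub_of_le {V : Type*} [Preorder V] {G : SimpleGraph V} {d : ℕ}
    {p : V → ℝ} {q : V → EuclideanSpace ℝ (Fin d)} (hq : FrameworkEquiv G p q) (hp : Monotone p)
    {u v : V} (huv : G.Adj u v) (hle : u ≤ v) : dist (q u) (q v) = p v - p u := by
  rw [hq huv, Real.dist_eq_sub_of_le (hp hle)]

theorem cycG_adj_castSucc_succ {n : ℕ} (i : Fin n) : (cycG (n + 1)).Adj i.castSucc i.succ := by
  refine ⟨Fin.castSucc_lt_succ.ne, Or.inl ?_⟩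
  simp [Nat.mod_eq_of_lt (Nat.succ_lt_succ i.isLt)]

theorem cycG_adj_zero_last {n : ℕ} (hn : n ≠ 0) : (cycG (n + 1)).Adj 0 (Fin.last n) := by
  refine ⟨Fin.ext_iff.not.mpr hn.symm, Or.inr ?_⟩
  simp

theorem stretched_cycle_universally_rigid_general (k : ℕ)
    (p : Fin k → ℝ) (hp : StrictMono p) :
    UniversallyRigid (cycG k) p := by
  rcases k with _ | n
  · exact fun _ _ _ u => u.elim0
  intro d q hq
  have hstep (i : Fin n) : dist (q i.castSucc) (q i.succ) ≤ p i.succ - p i.castSucc :=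
    (hq.dist_eq_sub_of_le hp.monotone (cycG_adj_castSucc_succ i) Fin.castSucc_lt_succ.le).le
  have hends : p (Fin.last n) - p 0 ≤ dist (q 0) (q (Fin.last n)) := by
    rcases eq_or_ne n 0 with rfl | hn
    · simp
    · exact (hq.dist_eq_sub_of_le hp.monotone (cycG_adj_zero_last hn) (Fin.zero_le _)).ge
  intro u v
  wlog huv : u ≤ v generalizing u v
  · rw [dist_comm, dist_comm (p u)]
    exact this v u (le_of_not_ge huv)
  rw [dist_eq_sub_of_dist_step_le_of_sub_le_dist_ends hstep hends huv,
    Real.dist_eq_sub_of_le (hp.monotone huv)]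

/-- A stretched cycle is universally rigid in `ℝ¹`. -/
theorem stretched_cycle_universally_rigid (k : ℕ) (hk : 3 ≤ k)
    (p : Fin k → ℝ) (hp : StrictMono p) :
    UniversallyRigid (cycG k) p :=
  stretched_cycle_universally_rigid_general k p hp
end

section
/- Let (G,p) be a universally rigid realization of a graph G in R^1, and let (G',p') be obtained from (G,p) by adding a new vertex w with p'(w) arbitrary and two new edges wx, wy to distinct vertices x,y of G. If p(x) ≠ p(y), then (G',p') is universally rigid. -/
/-- The degree-2 extension of `H`: a new vertex (`none`) joined to `a` and `b`. -/
def ext2 {V : Type*} (H : SimpleGraph V) (a b : V) : SimpleGraph (Option V) where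
  Adj x y := match x, y with
    | some u, some w => H.Adj u w
    | none, some u => u = a ∨ u = b
    | some u, none => u = a ∨ u = b
    | none, none => False
  symm := ⟨by rintro (_|x) (_|y) h <;> first | exact h.elim | exact h | exact H.adj_symm h⟩
  loopless := ⟨by rintro (_|x) h <;> first | exact h | exact H.irrefl h⟩

/-!
Universal rigidity of `(G, p)` fixes every realization `q` up to congruence on the old vertices.
The new vertex, like every old one, then has the distances prescribed by `p'` to the images of
`x` and `y`, which are distinct points since `p x ≠ p y`. In an inner product space, the law of
cosines forces a point with prescribed distances to two distinct points of a line onto that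
line, at the prescribed affine coordinate, so all of `q` is an isometric copy of `p'`.
-/

open AffineMap

theorem eq_lineMap_of_dist_eq {E : Type*} [NormedAddCommGroup E] [InnerProductSpace ℝ E]
    {A B C : E} {a b c : ℝ} (hab : a ≠ b) (hAB : dist A B = dist a b)
    (hCA : dist C A = dist c a) (hCB : dist C B = dist c b) :
    C = lineMap A B ((c - a) / (b - a)) := by
  rw [dist_comm, dist_eq_norm, Real.dist_eq, abs_sub_comm] at hAB
  rw [dist_eq_norm, Real.dist_eq] at hCA hCB
  have hba : b - a ≠ 0 := sub_ne_zero.mpr hab.symm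
  have hinner : inner ℝ (C - A) (B - A) = (c - a) * (b - a) := by
    have h := norm_sub_sq_real (C - A) (B - A)
    rw [show C - A - (B - A) = C - B by abel, hCA, hCB, hAB, sq_abs, sq_abs, sq_abs] at h
    linear_combination (1 / 2 : ℝ) * h
  have hzero : ‖(C - A) - ((c - a) / (b - a)) • (B - A)‖ ^ 2 = 0 := by
    rw [norm_sub_sq_real, inner_smul_right, hinner, norm_smul, hCA, Real.norm_eq_abs, hAB,
      mul_pow, sq_abs, sq_abs, sq_abs]
    field_simp
    ring
  rwa [lineMap_apply_module', ← sub_eq_zero, ← norm_eq_zero, ← pow_eq_zero_iff two_ne_zero,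
    sub_add_eq_sub_sub_swap]

theorem dist_eq_of_dist_eq_to_anchors {ι E : Type*} [NormedAddCommGroup E]
    [InnerProductSpace ℝ E] {p : ι → ℝ} {q : ι → E} {x y : ι} (hp : p x ≠ p y)
    (hx : ∀ i, dist (q i) (q x) = dist (p i) (p x))
    (hy : ∀ i, dist (q i) (q y) = dist (p i) (p y)) (i j : ι) :
    dist (q i) (q j) = dist (p i) (p j) := by
  have hxy : dist (q x) (q y) = dist (p x) (p y) := hy x
  have hq : ∀ k, q k = lineMap (q x) (q y) ((p k - p x) / (p y - p x)) := fun k =>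
    eq_lineMap_of_dist_eq hp hxy (hx k) (hy k)
  have hba : p y - p x ≠ 0 := sub_ne_zero.mpr hp.symm
  have hcoord : (p i - p x) / (p y - p x) - (p j - p x) / (p y - p x)
      = (p i - p j) / (p y - p x) := by ring
  rw [hq i, hq j, dist_lineMap_lineMap, hxy, Real.dist_eq, Real.dist_eq, Real.dist_eq, hcoord,
    abs_div, abs_sub_comm (p x), div_mul_cancel₀]
  exact abs_ne_zero.mpr hba

theorem FrameworkEquiv.comp_some_of_ext2 {V : Type*} {G : SimpleGraph V} {x y : V} {d : ℕ}
    {p : V → ℝ} {p' : Option V → ℝ} (hp' : ∀ v, p' (some v) = p v)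
    {q : Option V → EuclideanSpace ℝ (Fin d)} (hq : FrameworkEquiv (ext2 G x y) p' q) :
    FrameworkEquiv G p (q ∘ some) := fun u v huv => by
  simpa only [Function.comp_apply, hp'] using hq (show (ext2 G x y).Adj (some u) (some v) from huv)

theorem deg2_extension_universally_rigid_general {V : Type*} (G : SimpleGraph V)
    (p : V → ℝ) (x y : V) (hp : p x ≠ p y)
    (hur : UniversallyRigid G p)
    (p' : Option V → ℝ) (hp' : ∀ v : V, p' (some v) = p v) :
    UniversallyRigid (ext2 G x y) p' := by
  intro d q hq
  have hcongr : FrameworkCongr p (q ∘ some) := hur d _ (hq.comp_some_of_ext2 hp')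
  have hanchor : ∀ z, z = x ∨ z = y →
      ∀ i, dist (q i) (q (some z)) = dist (p' i) (p' (some z)) := by
    rintro z hz (_ | v)
    · exact hq hz
    · rw [hp', hp']
      exact hcongr v z
  exact dist_eq_of_dist_eq_to_anchors (by rwa [hp', hp'])
    (hanchor x (Or.inl rfl)) (hanchor y (Or.inr rfl))

/-- Degree-2 extension preserves universal rigidity on the line provided the two
attachment points have distinct positions. -/
theorem deg2_extension_universally_rigid {V : Type*} (G : SimpleGraph V)
    (p : V → ℝ) (x y : V) (hxy : x ≠ y) (hp : p x ≠ p y)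
    (hur : UniversallyRigid G p)
    (p' : Option V → ℝ) (hp' : ∀ v : V, p' (some v) = p v) :
    UniversallyRigid (ext2 G x y) p' :=
  deg2_extension_universally_rigid_general G p x y hp hur p' hp'
end

section
/- If G is a connected graph obtainable from a set of triangles by edge reduced attachments and edge additions, then G has no independent edge cut. -/
/-- `H` is a triangle: three distinct vertices, all pairs adjacent. -/
def IsTriangleGraph {α : Type*} (H : (⊤ : SimpleGraph α).Subgraph) : Prop :=
  ∃ a b c : α, a ≠ b ∧ a ≠ c ∧ b ≠ c ∧ H.verts = {a, b, c} ∧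
    ∀ x y, H.Adj x y ↔ x ≠ y ∧ x ∈ H.verts ∧ y ∈ H.verts

/-- `G` is the edge reduced attachment of `G₁` and `G₂` along `G₂`. -/
def IsERA {α : Type*} (G₁ G₂ G : (⊤ : SimpleGraph α).Subgraph) : Prop :=
  (G₁.verts ∩ G₂.verts).Nonempty ∧ (G₁.verts \ G₂.verts).Nonempty ∧
  (G₂.verts \ G₁.verts).Nonempty ∧
  G.verts = G₁.verts ∪ G₂.verts ∧
  ∀ x y, G.Adj x y ↔ G₁.Adj x y ∨
    (G₂.Adj x y ∧ ¬ (x ∈ G₁.verts ∩ G₂.verts ∧ y ∈ G₁.verts ∩ G₂.verts))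

/-- `G'` is obtained from `G` by adding one edge between existing vertices. -/
def IsEdgeAdd {α : Type*} (G G' : (⊤ : SimpleGraph α).Subgraph) : Prop :=
  G'.verts = G.verts ∧ ∃ a b, a ≠ b ∧ a ∈ G.verts ∧ b ∈ G.verts ∧
    ∀ x y, G'.Adj x y ↔ G.Adj x y ∨ (x = a ∧ y = b) ∨ (x = b ∧ y = a)

/-- Graphs obtainable from a set of triangles by edge reduced attachments and
edge additions. -/
inductive Buildable {α : Type*} : (⊤ : SimpleGraph α).Subgraph → Prop
  | triangle {H} : IsTriangleGraph H → Buildable H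
  | attach {G₁ G₂ G} : Buildable G₁ → Buildable G₂ → IsERA G₁ G₂ G → Buildable G
  | addEdge {G G'} : Buildable G → IsEdgeAdd G G' → Buildable G'

/-- `H` has an independent edge cut: a nonempty proper subset `X` of the vertex
set such that the edges between `X` and its complement are pairwise disjoint. -/
def HasIndepEdgeCut {α : Type*} (H : (⊤ : SimpleGraph α).Subgraph) : Prop :=
  ∃ X : Set α, X ⊆ H.verts ∧ X.Nonempty ∧ (H.verts \ X).Nonempty ∧
    ∀ u v u' v', u ∈ X → u' ∈ X → v ∈ H.verts \ X → v' ∈ H.verts \ X →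
      H.Adj u v → H.Adj u' v' → (u = u' ↔ v = v')

/-
Induction on the construction. A triangle has no independent edge cut: for a cut `X`, a vertex
`x ∈ X`, a vertex `w ∉ X` and the third vertex `t`, the edges `tw, xw` (if `t ∈ X`) or `xt, xw`
(if `t ∉ X`) are two crossing edges sharing an endpoint. Adding an edge only adds crossing edges.
For an edge reduced attachment `G` of `G₁` and `G₂`, a cut `X` of `G` either splits `V₁`, and then
`X ∩ V₁` is an independent cut of `G₁`, or (after replacing `X` by its complement) contains `V₁`.
In the latter case every `G₂`-edge leaving `X ∩ V₂` ends outside `V₁`, so it survives in `G`, and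
`X ∩ V₂` is an independent cut of `G₂`.
-/

section

variable {α : Type*}

def IsIndepEdgeCut (H : (⊤ : SimpleGraph α).Subgraph) (X : Set α) : Prop :=
  X ⊆ H.verts ∧ X.Nonempty ∧ (H.verts \ X).Nonempty ∧
    ∀ u v u' v', u ∈ X → u' ∈ X → v ∈ H.verts \ X → v' ∈ H.verts \ X →
      H.Adj u v → H.Adj u' v' → (u = u' ↔ v = v')

namespace IsIndepEdgeCut

variable {H H' : (⊤ : SimpleGraph α).Subgraph} {X : Set α}

theorem diff (hX : IsIndepEdgeCut H X) : IsIndepEdgeCut H (H.verts \ X) := by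
  obtain ⟨hXV, hXne, hXc, hmatch⟩ := hX
  refine ⟨Set.sdiff_subset, hXc, by rwa [Set.sdiff_sdiff_cancel_left hXV], ?_⟩
  intro u v u' v' hu hu' hv hv' huv hu'v'
  rw [Set.sdiff_sdiff_cancel_left hXV] at hv hv'
  exact (hmatch v u v' u' hv hv' hu hu' huv.symm hu'v'.symm).symm

theorem restrict (hX : IsIndepEdgeCut H' X) (hV : H.verts ⊆ H'.verts)
    (hAdj : ∀ u v, u ∈ X → v ∈ H.verts \ X → H.Adj u v → H'.Adj u v)
    (hin : (X ∩ H.verts).Nonempty) (hout : (H.verts \ X).Nonempty) :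
    IsIndepEdgeCut H (X ∩ H.verts) := by
  obtain ⟨-, -, -, hmatch⟩ := hX
  refine ⟨Set.inter_subset_right, hin, ?_, ?_⟩
  · rwa [Set.sdiff_inter_self_eq_sdiff]
  intro u v u' v' hu hu' hv hv' huv hu'v'
  rw [Set.sdiff_inter_self_eq_sdiff] at hv hv'
  exact hmatch u v u' v' hu.1 hu'.1 ⟨hV hv.1, hv.2⟩ ⟨hV hv'.1, hv'.2⟩
    (hAdj u v hu.1 hv huv) (hAdj u' v' hu'.1 hv' hu'v')

end IsIndepEdgeCut

theorem Set.exists_mem_triple_ne {a b c : α} (hab : a ≠ b) (hac : a ≠ c) (hbc : b ≠ c)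
    (x w : α) : ∃ t ∈ ({a, b, c} : Set α), t ≠ x ∧ t ≠ w := by
  by_cases ha : a ≠ x ∧ a ≠ w
  · exact ⟨a, by simp, ha⟩
  by_cases hb : b ≠ x ∧ b ≠ w
  · exact ⟨b, by simp, hb⟩
  exact ⟨c, by simp, by grind⟩

theorem IsTriangleGraph.not_hasIndepEdgeCut {H : (⊤ : SimpleGraph α).Subgraph}
    (hH : IsTriangleGraph H) : ¬ HasIndepEdgeCut H := by
  rintro ⟨X, hXV, ⟨x, hx⟩, ⟨w, hw, hwX⟩, hmatch⟩
  obtain ⟨a, b, c, hab, hac, hbc, hverts, hadj⟩ := hH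
  obtain ⟨t, ht, htx, htw⟩ := Set.exists_mem_triple_ne hab hac hbc x w
  rw [← hverts] at ht
  have hxw : H.Adj x w := (hadj x w).2 ⟨fun h => hwX (h ▸ hx), hXV hx, hw⟩
  by_cases htX : t ∈ X
  · exact htx ((hmatch t w x w htX hx ⟨hw, hwX⟩ ⟨hw, hwX⟩
      ((hadj t w).2 ⟨htw, ht, hw⟩) hxw).2 rfl)
  · exact htw ((hmatch x t x w hx hx ⟨ht, htX⟩ ⟨hw, hwX⟩
      ((hadj x t).2 ⟨htx.symm, hXV hx, ht⟩) hxw).1 rfl)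

theorem HasIndepEdgeCut.of_isEdgeAdd {G G' : (⊤ : SimpleGraph α).Subgraph}
    (hG' : HasIndepEdgeCut G') (h : IsEdgeAdd G G') : HasIndepEdgeCut G := by
  obtain ⟨hV, a, b, -, -, -, hAdj⟩ := h
  obtain ⟨X, hX : IsIndepEdgeCut G' X⟩ := hG'
  obtain ⟨x, hx⟩ := hX.2.1
  obtain ⟨w, hw⟩ := hX.2.2.1
  exact ⟨X ∩ G.verts, hX.restrict hV.ge (fun u v _ _ huv => (hAdj u v).2 (.inl huv))
    ⟨x, hx, hV ▸ hX.1 hx⟩ (hV ▸ ⟨w, hw⟩)⟩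

namespace IsERA

variable {G₁ G₂ G : (⊤ : SimpleGraph α).Subgraph} {X : Set α}

theorem hasIndepEdgeCut_right_of_subset (h : IsERA G₁ G₂ G) (hX : IsIndepEdgeCut G X)
    (h₁ : G₁.verts ⊆ X) : HasIndepEdgeCut G₂ := by
  obtain ⟨⟨p, hp₁, hp₂⟩, -, -, hV, hAdj⟩ := h
  obtain ⟨w, hwV, hwX⟩ := hX.2.2.1
  have hw₂ : w ∈ G₂.verts := by
    rw [hV] at hwV
    exact hwV.resolve_left fun hw₁ => hwX (h₁ hw₁)
  refine ⟨X ∩ G₂.verts, hX.restrict (hV ▸ Set.subset_union_right) ?_ ⟨p, h₁ hp₁, hp₂⟩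
    ⟨w, hw₂, hwX⟩⟩
  intro u v _ hv huv
  exact (hAdj u v).2 (.inr ⟨huv, fun huv' => hv.2 (h₁ huv'.2.1)⟩)

theorem hasIndepEdgeCut_left_or_right (h : IsERA G₁ G₂ G) (hG : HasIndepEdgeCut G) :
    HasIndepEdgeCut G₁ ∨ HasIndepEdgeCut G₂ := by
  obtain ⟨X, hX : IsIndepEdgeCut G X⟩ := hG
  obtain ⟨-, -, -, hV, hAdj⟩ := id h
  have hV₁ : G₁.verts ⊆ G.verts := hV ▸ Set.subset_union_left
  by_cases hsplit : (X ∩ G₁.verts).Nonempty ∧ (G₁.verts \ X).Nonempty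
  · refine .inl ⟨X ∩ G₁.verts, hX.restrict hV₁ ?_ hsplit.1 hsplit.2⟩
    exact fun u v _ _ huv => (hAdj u v).2 (.inl huv)
  rw [not_and_or, Set.not_nonempty_iff_eq_empty, Set.not_nonempty_iff_eq_empty,
    Set.sdiff_eq_empty, ← Set.disjoint_iff_inter_eq_empty] at hsplit
  refine .inr ?_
  rcases hsplit with hdisj | hsub
  · exact h.hasIndepEdgeCut_right_of_subset hX.diff
      (Set.subset_sdiff.2 ⟨hV₁, hdisj.symm⟩)
  · exact h.hasIndepEdgeCut_right_of_subset hX hsub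

end IsERA

theorem Buildable.not_hasIndepEdgeCut {G : (⊤ : SimpleGraph α).Subgraph} (hG : Buildable G) :
    ¬ HasIndepEdgeCut G := by
  induction hG with
  | triangle ht => exact ht.not_hasIndepEdgeCut
  | attach _ _ hera ih₁ ih₂ => exact fun hG => (hera.hasIndepEdgeCut_left_or_right hG).elim ih₁ ih₂
  | addEdge _ hadd ih => exact fun hG => ih (hG.of_isEdgeAdd hadd)

end

theorem buildable_no_indep_edge_cut_general {α : Type*} (G : (⊤ : SimpleGraph α).Subgraph)
    (hb : Buildable G) :
    ¬ HasIndepEdgeCut G :=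
  hb.not_hasIndepEdgeCut

/-- A connected buildable graph has no independent edge cut. -/
theorem buildable_no_indep_edge_cut {α : Type*} (G : (⊤ : SimpleGraph α).Subgraph)
    (hc : G.Connected) (hb : Buildable G) :
    ¬ HasIndepEdgeCut G :=
  buildable_no_indep_edge_cut_general G hb
end

section
/- Let G and H be disjoint graphs each generically universally rigid in R^1, each on at least 4 vertices, and let B = G ⊔ H be obtained by adding k ≥ 4 disjoint edges v_1u_1, ..., v_ku_k between distinct vertices v_i of G and distinct vertices u_i of H. Then B is generically universally rigid in R^1. -/
/-- The join of `G` and `H` along the `k` edges `v i — u i`. -/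
def joinGraph {V U : Type*} {k : ℕ} (G : SimpleGraph V) (H : SimpleGraph U)
    (v : Fin k → V) (u : Fin k → U) : SimpleGraph (V ⊕ U) where
  Adj x y := match x, y with
    | .inl a, .inl b => G.Adj a b
    | .inr a, .inr b => H.Adj a b
    | .inl a, .inr b => ∃ i, a = v i ∧ b = u i
    | .inr a, .inl b => ∃ i, b = v i ∧ a = u i
  symm := by
    constructor
    rintro (a|a) (b|b) h
    · exact G.adj_symm h
    · exact h
    · exact h
    · exact H.adj_symm h
  loopless := by
    constructor
    rintro (a|a) h
    · exact G.irrefl h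
    · exact H.irrefl h

open MvPolynomial Matrix
open scoped RealInnerProductSpace

section BilinearSystem

variable {A : Type*} [CommRing A]

def bilinearMatrix (x y : Fin 4 → A) : Matrix (Fin 4) (Fin 4) A :=
  Matrix.of fun i => ![1, x i, y i, x i * y i]

theorem bilinearMatrix_mulVec (x y : Fin 4 → A) (c α β γ : A) (i : Fin 4) :
    (bilinearMatrix x y *ᵥ ![c, α, β, γ]) i = c + α * x i + β * y i + γ * (x i * y i) := by
  simp only [mulVec, dotProduct, bilinearMatrix, of_apply, Fin.sum_univ_four, cons_val_zero,
    one_mul, cons_val_one, cons_val]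
  ring

variable {R : Type*} [CommRing R] [Algebra R A]

theorem det_bilinearMatrix_X_ne_zero [Nontrivial R] :
    (bilinearMatrix (fun i => X (.inl i)) (fun i => X (.inr i)) :
      Matrix (Fin 4) (Fin 4) (MvPolynomial (Fin 4 ⊕ Fin 4) R)).det ≠ 0 := by
  intro h
  -- evaluate at the corners `(0,0), (0,1), (1,0), (1,1)` of the unit square
  have h01 := congrArg (eval (Sum.elim ![(0 : R), 0, 1, 1] ![0, 1, 0, 1])) h
  have hcorners : (bilinearMatrix (fun i => X (.inl i)) (fun i => X (.inr i))).map
      (eval (Sum.elim ![(0 : R), 0, 1, 1] ![0, 1, 0, 1])) =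
        Matrix.of ![![1, 0, 0, 0], ![1, 0, 1, 0], ![1, 1, 0, 0], ![1, 1, 1, 1]] := by
    ext i j
    fin_cases i <;> fin_cases j <;> simp [bilinearMatrix]
  rw [RingHom.map_det, RingHom.mapMatrix_apply, hcorners, det_succ_row_zero] at h01
  simp [Fin.sum_univ_succ, det_fin_three, Fin.succAbove] at h01

theorem det_bilinearMatrix_ne_zero [Nontrivial R] {z : Fin 4 ⊕ Fin 4 → A}
    (hz : AlgebraicIndependent R z) :
    (bilinearMatrix (fun i => z (.inl i)) (fun i => z (.inr i))).det ≠ 0 := by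
  have hmap : bilinearMatrix (fun i => z (.inl i)) (fun i => z (.inr i)) =
      (bilinearMatrix (fun i => X (.inl i)) (fun i => X (.inr i))).map (aeval (R := R) z) := by
    ext i j
    fin_cases j <;> simp [bilinearMatrix]
  rw [hmap, ← AlgHom.mapMatrix_apply, ← AlgHom.map_det, ← map_zero (aeval (R := R) z)]
  exact hz.ne det_bilinearMatrix_X_ne_zero

theorem eq_zero_of_forall_add_mul_add_mul_add_mul_eq_zero [IsDomain A]
    {z : Fin 4 ⊕ Fin 4 → A} (hz : AlgebraicIndependent R z) {c α β γ : A}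
    (h : ∀ i, c + α * z (.inl i) + β * z (.inr i) + γ * (z (.inl i) * z (.inr i)) = 0) :
    c = 0 ∧ α = 0 ∧ β = 0 ∧ γ = 0 := by
  have : Nontrivial R := (algebraMap R A).domain_nontrivial
  have hv := eq_zero_of_mulVec_eq_zero (det_bilinearMatrix_ne_zero hz)
    (v := ![c, α, β, γ]) (funext fun i => (bilinearMatrix_mulVec _ _ _ _ _ _ i).trans (h i))
  simpa [funext_iff, Fin.forall_fin_succ] using hv

end BilinearSystem

section LineIsometry

variable {E : Type*} [NormedAddCommGroup E] [InnerProductSpace ℝ E]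

theorem eq_div_smul_of_norm_eq_abs {z w : E} {s r : ℝ} (hr : r ≠ 0) (hz : ‖z‖ = |s|)
    (hw : ‖w‖ = |r|) (hzw : ‖z - w‖ = |s - r|) : z = (s / r) • w := by
  have hinner : ⟪z, w⟫ = s * r := by
    have := norm_sub_sq_real z w
    rw [hz, hw, hzw, sq_abs, sq_abs, sq_abs] at this
    linarith
  have h0 : ‖z - (s / r) • w‖ ^ 2 = 0 := by
    rw [norm_sub_sq_real, real_inner_smul_right, norm_smul, mul_pow, Real.norm_eq_abs, sq_abs,
      hz, hw, hinner, sq_abs, sq_abs]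
    field_simp
    ring
  rwa [pow_eq_zero_iff two_ne_zero, norm_eq_zero, sub_eq_zero] at h0

theorem exists_unit_forall_eq_add_smul {ι : Type*} {x : ι → ℝ} {Q : ι → E}
    (h : ∀ a b, ‖Q a - Q b‖ = |x a - x b|) {a₀ a₁ : ι} (hne : x a₀ ≠ x a₁) :
    ∃ A e : E, ‖e‖ = 1 ∧ ∀ a, Q a = A + x a • e := by
  have hr : x a₁ - x a₀ ≠ 0 := sub_ne_zero.mpr hne.symm
  refine ⟨Q a₀ - x a₀ • (x a₁ - x a₀)⁻¹ • (Q a₁ - Q a₀), (x a₁ - x a₀)⁻¹ • (Q a₁ - Q a₀),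
    ?_, fun a => ?_⟩
  · rw [norm_smul, h, norm_inv, Real.norm_eq_abs, inv_mul_cancel₀ (abs_ne_zero.mpr hr)]
  · have hline : Q a - Q a₀ = ((x a - x a₀) / (x a₁ - x a₀)) • (Q a₁ - Q a₀) :=
      eq_div_smul_of_norm_eq_abs hr (h a a₀) (h a₁ a₀) (by
        rw [sub_sub_sub_cancel_right, h]; congr 1; ring)
    rw [div_eq_mul_inv, mul_smul] at hline
    linear_combination (norm := module) hline

theorem norm_add_smul_sub_smul_sq {D e f : E} (he : ‖e‖ = 1) (hf : ‖f‖ = 1) (s t : ℝ) :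
    ‖D + s • e - t • f‖ ^ 2
      = ‖D‖ ^ 2 + s ^ 2 + t ^ 2 + 2 * s * ⟪D, e⟫ - 2 * t * ⟪D, f⟫ - 2 * s * t * ⟪e, f⟫ := by
  rw [← real_inner_self_eq_norm_sq, ← real_inner_self_eq_norm_sq D]
  simp only [inner_add_left, inner_add_right, inner_sub_left, inner_sub_right,
    real_inner_smul_left, real_inner_smul_right, real_inner_self_eq_norm_sq, norm_smul,
    Real.norm_eq_abs, mul_pow, sq_abs, he, hf,
    real_inner_comm e D, real_inner_comm f D, real_inner_comm f e]
  ring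

theorem eq_and_eq_of_algebraicIndependent_of_norm_eq_abs {A B e f : E} (he : ‖e‖ = 1)
    (hf : ‖f‖ = 1) {z : Fin 4 ⊕ Fin 4 → ℝ} (hz : AlgebraicIndependent ℚ z)
    (h : ∀ i, ‖A + z (.inl i) • e - (B + z (.inr i) • f)‖ = |z (.inl i) - z (.inr i)|) :
    A = B ∧ e = f := by
  obtain ⟨hAB, -, -, hef⟩ := eq_zero_of_forall_add_mul_add_mul_add_mul_eq_zero hz
    (c := ‖A - B‖ ^ 2) (α := 2 * ⟪A - B, e⟫) (β := -2 * ⟪A - B, f⟫) (γ := 2 - 2 * ⟪e, f⟫)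
    fun i => by
      have hi := congrArg (· ^ 2) (h i)
      simp only [sq_abs] at hi
      rw [show A + z (.inl i) • e - (B + z (.inr i) • f)
          = A - B + z (.inl i) • e - z (.inr i) • f by abel,
        norm_add_smul_sub_smul_sq he hf] at hi
      linear_combination hi
  refine ⟨by simpa [sub_eq_zero] using hAB, ?_⟩
  have : ‖e - f‖ ^ 2 = 0 := by rw [norm_sub_sq_real, he, hf]; linarith
  simpa [sub_eq_zero] using this

end LineIsometry

section Frameworks

variable {V W : Type*} {G : SimpleGraph V} {G' : SimpleGraph W} {d : ℕ}

theorem FrameworkEquiv.comp (f : G →g G') {p : W → ℝ} {q : W → EuclideanSpace ℝ (Fin d)}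
    (h : FrameworkEquiv G' p q) : FrameworkEquiv G (p ∘ f) (q ∘ f) :=
  fun _ _ hab => h (f.map_adj hab)

theorem frameworkCongr_iff_norm {p : V → ℝ} {q : V → EuclideanSpace ℝ (Fin d)} :
    FrameworkCongr p q ↔ ∀ a b, ‖q a - q b‖ = |p a - p b| := by
  simp only [FrameworkCongr, dist_eq_norm, Real.norm_eq_abs]

theorem GenUnivRigid.frameworkCongr_comp (hG : GenUnivRigid G) (f : G ↪g G') {p : W → ℝ}
    (hp : GenericConfig p) {q : W → EuclideanSpace ℝ (Fin d)} (hq : FrameworkEquiv G' p q) :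
    FrameworkCongr (p ∘ f) (q ∘ f) :=
  hG _ (hp.comp f f.injective) d _ (hq.comp f.toHom)

end Frameworks

section Join

variable {V U : Type*} {k : ℕ} (G : SimpleGraph V) (H : SimpleGraph U)
  (v : Fin k → V) (u : Fin k → U)

def joinGraph.inlEmbedding : G ↪g joinGraph G H v u := ⟨Function.Embedding.inl, Iff.rfl⟩

def joinGraph.inrEmbedding : H ↪g joinGraph G H v u := ⟨Function.Embedding.inr, Iff.rfl⟩

end Join

theorem join_genUnivRigid_general {V U : Type*} {k : ℕ}
    (G : SimpleGraph V) (H : SimpleGraph U) (v : Fin k → V) (u : Fin k → U)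
    (hv : Function.Injective v) (hu : Function.Injective u)
    (hk : 4 ≤ k)
    (hG : GenUnivRigid G) (hH : GenUnivRigid H) :
    GenUnivRigid (joinGraph G H v u) := by
  intro p hp d q hq
  have hcongG := hG.frameworkCongr_comp (joinGraph.inlEmbedding G H v u) hp hq
  have hcongH := hH.frameworkCongr_comp (joinGraph.inrEmbedding G H v u) hp hq
  let ι := Fin.castLEEmb hk
  obtain ⟨A, e, he, hA⟩ : ∃ A e, ‖e‖ = 1 ∧ ∀ a, q (.inl a) = A + p (.inl a) • e :=
    exists_unit_forall_eq_add_smul (frameworkCongr_iff_norm.mp hcongG)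
      (a₀ := v (ι 0)) (a₁ := v (ι 1)) (hp.injective.ne (by simp [hv.eq_iff]))
  obtain ⟨B, f, hf, hB⟩ : ∃ B f, ‖f‖ = 1 ∧ ∀ b, q (.inr b) = B + p (.inr b) • f :=
    exists_unit_forall_eq_add_smul (frameworkCongr_iff_norm.mp hcongH)
      (a₀ := u (ι 0)) (a₁ := u (ι 1)) (hp.injective.ne (by simp [hu.eq_iff]))
  have hz : AlgebraicIndependent ℚ (p ∘ Sum.map (v ∘ ι) (u ∘ ι)) :=
    hp.comp _ ((hv.comp ι.injective).sumMap (hu.comp ι.injective))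
  obtain ⟨rfl, rfl⟩ := eq_and_eq_of_algebraicIndependent_of_norm_eq_abs he hf hz fun i => by
    have hedge := hq (show (joinGraph G H v u).Adj (.inl (v (ι i))) (.inr (u (ι i))) from
      ⟨ι i, rfl, rfl⟩)
    rwa [dist_eq_norm, Real.dist_eq, hA, hB] at hedge
  have hcross (a : V) (b : U) :
      dist (q (.inl a)) (q (.inr b)) = dist (p (.inl a)) (p (.inr b)) := by
    rw [dist_eq_norm, hA, hB, add_sub_add_left_eq_sub, ← sub_smul, norm_smul, he, mul_one,
      Real.dist_eq, Real.norm_eq_abs]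
  rintro (a | a) (b | b)
  · exact hcongG a b
  · exact hcross a b
  · rw [dist_comm, dist_comm (p _)]
    exact hcross b a
  · exact hcongH a b

/-- The join of two generically universally rigid graphs along `k ≥ 4` disjoint
edges is generically universally rigid in `ℝ¹`. -/
theorem join_genUnivRigid {V U : Type*} [Fintype V] [Fintype U] {k : ℕ}
    (G : SimpleGraph V) (H : SimpleGraph U) (v : Fin k → V) (u : Fin k → U)
    (hv : Function.Injective v) (hu : Function.Injective u)
    (hk : 4 ≤ k) (hV : 4 ≤ Fintype.card V) (hU : 4 ≤ Fintype.card U)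
    (hG : GenUnivRigid G) (hH : GenUnivRigid H) :
    GenUnivRigid (joinGraph G H v u) :=
  join_genUnivRigid_general G H v u hv hu hk hG hH
end

section
/- The graph K_n − e obtained from the complete graph on n vertices by deleting one edge is generically universally rigid in R^1 for all n ≥ 4. -/
/-! Two vertices `c ≠ e` outside the missing edge `ab` are adjacent to each other and to both
`a` and `b`. In any realization `q` equivalent to `p`, the triangles `a c e` and `b c e` have
the side lengths of degenerate (collinear) triangles, so the equality case of the triangle
inequality places `q a` and `q b` on the line through `q c` and `q e`, at the positions dictated
by `p`. Hence `‖q a - q b‖ = |p a - p b|` as well. -/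

open SimpleGraph

section CollinearRealization

variable {E : Type*} [NormedAddCommGroup E] [InnerProductSpace ℝ E]

lemma inner_eq_mul_of_norm_eq_abs {x y : E} {s t : ℝ} (hx : ‖x‖ = |s|) (hy : ‖y‖ = |t|)
    (hxy : ‖x - y‖ = |s - t|) : inner ℝ x y = s * t := by
  have h := norm_sub_sq_real x y
  rw [hx, hy, hxy, sq_abs, sq_abs, sq_abs] at h
  linarith

lemma eq_div_smul_of_norm_eq_abs_s11 {x y : E} {s t : ℝ} (ht : t ≠ 0) (hx : ‖x‖ = |s|)
    (hy : ‖y‖ = |t|) (hxy : ‖x - y‖ = |s - t|) : x = (s / t) • y := by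
  have hinner := inner_eq_mul_of_norm_eq_abs hx hy hxy
  have hsq : ‖x - (s / t) • y‖ ^ 2 = 0 := by
    rw [norm_sub_sq_real, real_inner_smul_right, norm_smul, hx, hy, hinner,
      Real.norm_eq_abs, mul_pow, sq_abs, sq_abs, sq_abs]
    field_simp
    ring
  rwa [sq_eq_zero_iff, norm_eq_zero, sub_eq_zero] at hsq

lemma dist_eq_of_dist_eq_through_pair {x y z w : E} {ξ η ζ ω : ℝ} (hζω : ζ ≠ ω)
    (hzw : dist z w = dist ζ ω) (hxz : dist x z = dist ξ ζ) (hxw : dist x w = dist ξ ω)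
    (hyz : dist y z = dist η ζ) (hyw : dist y w = dist η ω) : dist x y = dist ξ η := by
  simp only [dist_eq_norm, Real.norm_eq_abs] at *
  have hbase : ‖w - z‖ = |ω - ζ| := by rw [norm_sub_rev, hzw, abs_sub_comm]
  have hω : ω - ζ ≠ 0 := sub_ne_zero.mpr hζω.symm
  have hpos : ∀ {v : E} {ν : ℝ}, ‖v - z‖ = |ν - ζ| → ‖v - w‖ = |ν - ω| →
      v - z = ((ν - ζ) / (ω - ζ)) • (w - z) := fun hvz hvw =>
    eq_div_smul_of_norm_eq_abs_s11 hω hvz hbase (by simpa using hvw)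
  calc ‖x - y‖ = ‖(x - z) - (y - z)‖ := by rw [sub_sub_sub_cancel_right]
    _ = |(ξ - ζ) / (ω - ζ) - (η - ζ) / (ω - ζ)| * ‖w - z‖ := by
      rw [hpos hxz hxw, hpos hyz hyw, ← sub_smul, norm_smul, Real.norm_eq_abs]
    _ = |ξ - η| := by
      rw [hbase, div_sub_div_same, sub_sub_sub_cancel_right, abs_div,
        div_mul_cancel₀ _ (abs_ne_zero.mpr hω)]

end CollinearRealization

lemma FrameworkEquiv.dist_eq_of_adj_of_adj {V : Type*} {G : SimpleGraph V} {d : ℕ}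
    {p : V → ℝ} {q : V → EuclideanSpace ℝ (Fin d)} (hq : FrameworkEquiv G p q)
    {u v c e : V} (hpce : p c ≠ p e) (hce : G.Adj c e) (huc : G.Adj u c) (hue : G.Adj u e)
    (hvc : G.Adj v c) (hve : G.Adj v e) : dist (q u) (q v) = dist (p u) (p v) :=
  dist_eq_of_dist_eq_through_pair hpce (hq hce) (hq huc) (hq hue) (hq hvc) (hq hve)

lemma top_sdiff_edge_adj_iff {V : Type*} {a b u v : V} :
    ((⊤ : SimpleGraph V) \ fromEdgeSet {s(a, b)}).Adj u v ↔ u ≠ v ∧ s(u, v) ≠ s(a, b) := by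
  simp only [sdiff_adj, top_adj, fromEdgeSet_adj, Set.mem_singleton_iff]
  tauto

lemma top_sdiff_edge_adj_of_ne_of_ne {V : Type*} {a b u v : V} (hva : v ≠ a) (hvb : v ≠ b)
    (huv : u ≠ v) : ((⊤ : SimpleGraph V) \ fromEdgeSet {s(a, b)}).Adj u v :=
  top_sdiff_edge_adj_iff.mpr ⟨huv, fun h => by
    rcases Sym2.mem_iff.mp (h ▸ Sym2.mem_mk_right u v) with rfl | rfl <;> contradiction⟩

lemma Fintype.exists_ne_pair_avoiding {α : Type*} [Fintype α] (hα : 4 ≤ Fintype.card α)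
    (a b : α) : ∃ c e : α, c ≠ a ∧ c ≠ b ∧ e ≠ a ∧ e ≠ b ∧ c ≠ e := by
  classical
  have hcard : 1 < ({a, b}ᶜ : Finset α).card := by
    rw [Finset.card_compl]
    have := Finset.card_le_two (a := a) (b := b)
    omega
  obtain ⟨c, hc, e, he, hce⟩ := Finset.one_lt_card.mp hcard
  simp only [Finset.mem_compl, Finset.mem_insert, Finset.mem_singleton, not_or] at hc he
  exact ⟨c, e, hc.1, hc.2, he.1, he.2, hce⟩

theorem Kn_minus_e_genUnivRigid_general (n : ℕ) (hn : 4 ≤ n) (a b : Fin n) :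
    GenUnivRigid ((⊤ : SimpleGraph (Fin n)) \ SimpleGraph.fromEdgeSet {s(a, b)}) := by
  intro p hp d q hq u v
  obtain ⟨c, e, hca, hcb, hea, heb, hce⟩ :=
    Fintype.exists_ne_pair_avoiding (by simpa using hn) a b
  rcases eq_or_ne u v with rfl | huv
  · simp
  by_cases huv_ab : s(u, v) = s(a, b)
  · have hu : u = a ∨ u = b := Sym2.mem_iff.mp (huv_ab ▸ Sym2.mem_mk_left u v)
    have hv : v = a ∨ v = b := Sym2.mem_iff.mp (huv_ab ▸ Sym2.mem_mk_right u v)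
    have ne_c : ∀ x, x = a ∨ x = b → x ≠ c := by rintro x (rfl | rfl) rfl <;> contradiction
    have ne_e : ∀ x, x = a ∨ x = b → x ≠ e := by rintro x (rfl | rfl) rfl <;> contradiction
    exact hq.dist_eq_of_adj_of_adj (hp.injective.ne hce)
      (top_sdiff_edge_adj_of_ne_of_ne hea heb hce)
      (top_sdiff_edge_adj_of_ne_of_ne hca hcb (ne_c u hu))
      (top_sdiff_edge_adj_of_ne_of_ne hea heb (ne_e u hu))
      (top_sdiff_edge_adj_of_ne_of_ne hca hcb (ne_c v hv))
      (top_sdiff_edge_adj_of_ne_of_ne hea heb (ne_e v hv))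
  · exact hq (top_sdiff_edge_adj_iff.mpr ⟨huv, huv_ab⟩)

/-- `Kₙ − e` is generically universally rigid in `ℝ¹` for `n ≥ 4`. -/
theorem Kn_minus_e_genUnivRigid (n : ℕ) (hn : 4 ≤ n) (a b : Fin n) (hab : a ≠ b) :
    GenUnivRigid ((⊤ : SimpleGraph (Fin n)) \ SimpleGraph.fromEdgeSet {s(a, b)}) :=
  Kn_minus_e_genUnivRigid_general n hn a b
end

section
/- If G=(V,E) is a graph with |V| ≥ 6 and |E| < (3/2)|V|, then G is not generically universally rigid in R^1. -/
/-!
A vertex of degree at most one can be reflected through its neighbour, so a generically universally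
rigid graph on at least three vertices has minimum degree two, and if `2|E| < 3|V|` it has a vertex
`v` of degree two. Deleting such a `v` preserves generic universal rigidity: given a realization
`q'` of `G - v` equivalent to a generic `p'`, average it with `p'` itself so that the two
neighbours `a, b` of `v` get distinct images, extend `p'` by a generic position of `v` for which the
two edges at `v` and the segment `ab` satisfy the triangle inequalities, and place `v` in one extra
dimension. Universal rigidity of the extended framework makes `q'` congruent to `p'`. The bounds
`2|E| < 3|V|` and `2|E| + 6 < 4|V|` survive the deletion and, with `|E| ≥ |V|`, keep `|V| ≥ 3`,
so the descent never stops.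
-/

lemma AlgebraicIndependent.exists_option_elim_mem_Ioo {ι : Type*} [Countable ι] {p : ι → ℝ}
    (hp : AlgebraicIndependent ℚ p) {l r : ℝ} (hlr : l < r) :
    ∃ x ∈ Set.Ioo l r, AlgebraicIndependent ℚ (fun o : Option ι => o.elim x p) := by
  have : Countable (Algebra.adjoin ℚ (Set.range p)) :=
    Cardinal.mk_le_aleph0_iff.1 <|
      (Algebra.cardinalMk_adjoin_le ℚ _).trans
        (max_le (max_le Cardinal.mk_le_aleph0 (Set.countable_range p).le_aleph0) le_rfl)
  obtain ⟨x, hx, hxI⟩ :=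
    ((Algebraic.countable (Algebra.adjoin ℚ (Set.range p)) ℝ).dense_compl ℝ).exists_between hlr
  exact ⟨x, hxI, (hp.option_iff_transcendental x).2 hx⟩

theorem exists_genericConfig (ι : Type*) [Finite ι] : ∃ p : ι → ℝ, GenericConfig p := by
  induction ι using Finite.induction_empty_option with
  | of_equiv e ih =>
    obtain ⟨p, hp⟩ := ih
    exact ⟨p ∘ e.symm, hp.comp _ e.symm.injective⟩
  | h_empty => exact ⟨PEmpty.elim, algebraicIndependent_empty_type⟩
  | h_option ih =>
    obtain ⟨p, hp⟩ := ih
    obtain ⟨x, -, hx⟩ := hp.exists_option_elim_mem_Ioo zero_lt_one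
    exact ⟨_, hx⟩

theorem GenericConfig.exists_extend_mem_Ioo {V : Type*} [Finite V] {v : V}
    {p' : ({v}ᶜ : Set V) → ℝ} (hp' : GenericConfig p') {l r : ℝ} (hlr : l < r) :
    ∃ p : V → ℝ, GenericConfig p ∧ p v ∈ Set.Ioo l r ∧
      ∀ w : ({v}ᶜ : Set V), p w = p' w := by
  classical
  obtain ⟨x, hx, hgen⟩ := AlgebraicIndependent.exists_option_elim_mem_Ioo hp' hlr
  let e : Option ({v}ᶜ : Set V) ≃ V := Equiv.optionSubtypeNe v
  have he : e.symm v = none := Equiv.optionSubtypeNe_symm_self v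
  have he' (w : ({v}ᶜ : Set V)) : e.symm w = some w := Equiv.optionSubtypeNe_symm_of_ne w.2
  refine ⟨fun w => (e.symm w).elim x p', hgen.comp _ e.symm.injective, ?_, fun w => ?_⟩
  · simpa only [he, Option.elim_none] using hx
  · simp only [he', Option.elim_some]

theorem WithLp.dist_toLp_prod_sq {E F : Type*} [SeminormedAddCommGroup E]
    [SeminormedAddCommGroup F] (x x' : E) (y y' : F) :
    dist (WithLp.toLp 2 (x, y)) (WithLp.toLp 2 (x', y')) ^ 2 = dist x x' ^ 2 + dist y y' ^ 2 := by
  rw [WithLp.prod_dist_eq_of_L2, Real.sq_sqrt (by positivity)]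
  rfl

theorem dist_smul_toLp_prod_sq {E F : Type*} [SeminormedAddCommGroup E] [NormedSpace ℝ E]
    [SeminormedAddCommGroup F] [NormedSpace ℝ F] (x x' : E) (y y' : F) :
    dist ((√2)⁻¹ • WithLp.toLp 2 (x, y)) ((√2)⁻¹ • WithLp.toLp 2 (x', y')) ^ 2
      = (dist x x' ^ 2 + dist y y' ^ 2) / 2 := by
  rw [dist_smul₀, mul_pow, WithLp.dist_toLp_prod_sq, norm_inv, Real.norm_eq_abs,
    abs_of_nonneg (Real.sqrt_nonneg 2), inv_pow, Real.sq_sqrt zero_le_two]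
  ring

theorem exists_dist_eq_dist_eq {F : Type*} [NormedAddCommGroup F] [NormedSpace ℝ F] (y z : F)
    {r₁ r₂ : ℝ} (h₁ : |r₁ - r₂| ≤ dist y z) (h₂ : dist y z ≤ r₁ + r₂) :
    ∃ c : WithLp 2 (F × ℝ),
      dist c (WithLp.toLp 2 (y, 0)) = r₁ ∧ dist c (WithLp.toLp 2 (z, 0)) = r₂ := by
  set σ := dist y z
  obtain ⟨hr₁, hr₂⟩ : 0 ≤ r₁ ∧ 0 ≤ r₂ := by
    constructor <;> linarith [(abs_le.1 h₁).1, (abs_le.1 h₁).2]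
  rcases (dist_nonneg : 0 ≤ σ).eq_or_lt with hσ | hσ
  · obtain rfl : y = z := dist_eq_zero.1 hσ.symm
    obtain rfl : r₁ = r₂ := by linarith [(abs_le.1 h₁).1, (abs_le.1 h₁).2]
    refine ⟨WithLp.toLp 2 (y, r₁), ?_, ?_⟩ <;>
      rw [← sq_eq_sq₀ dist_nonneg hr₁, WithLp.dist_toLp_prod_sq] <;> simp
  -- `c` lies above the point of the line `yz` at signed distance `α` from `y`
  obtain ⟨α, hα⟩ : ∃ α, 2 * σ * α = σ ^ 2 + r₁ ^ 2 - r₂ ^ 2 :=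
    ⟨_, mul_div_cancel₀ _ (by positivity)⟩
  have hβ : 0 ≤ r₁ ^ 2 - α ^ 2 := by
    refine nonneg_of_mul_nonneg_right (a := 4 * σ ^ 2) ?_ (by positivity)
    have h := abs_le.1 h₁
    have : 4 * σ ^ 2 * (r₁ ^ 2 - α ^ 2) =
        (r₂ - σ + r₁) * (r₂ + σ - r₁) * (σ + r₁ - r₂) * (σ + r₁ + r₂) := by
      linear_combination (-(2 * σ * α + σ ^ 2 + r₁ ^ 2 - r₂ ^ 2)) * hα
    rw [this]
    exact mul_nonneg (mul_nonneg (mul_nonneg (by linarith) (by linarith)) (by linarith))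
      (by linarith)
  have ht : α / σ * σ = α := div_mul_cancel₀ α hσ.ne'
  refine ⟨WithLp.toLp 2 (AffineMap.lineMap y z (α / σ), √(r₁ ^ 2 - α ^ 2)), ?_, ?_⟩
  · rw [← sq_eq_sq₀ dist_nonneg hr₁, WithLp.dist_toLp_prod_sq, dist_lineMap_left,
      Real.dist_eq, sub_zero, sq_abs, Real.sq_sqrt hβ, Real.norm_eq_abs, mul_pow, sq_abs,
      ← mul_pow, ht]
    ring
  · rw [← sq_eq_sq₀ dist_nonneg hr₂, WithLp.dist_toLp_prod_sq, dist_lineMap_right,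
      Real.dist_eq, sub_zero, sq_abs, Real.sq_sqrt hβ, Real.norm_eq_abs, mul_pow, sq_abs,
      ← mul_pow, sub_mul, one_mul, ht]
    linear_combination -hα

theorem exists_Ioo_forall_abs_sub_abs_le_le_add (A B : ℝ) {σ : ℝ} (hσ : 0 < σ) :
    ∃ l r, l < r ∧ ∀ x ∈ Set.Ioo l r,
      |(|x - A| - |x - B|)| ≤ σ ∧ σ ≤ |x - A| + |x - B| := by
  rcases le_or_gt σ |A - B| with h | h
  · refine ⟨(A + B) / 2 - σ / 2, (A + B) / 2 + σ / 2, by linarith,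
      fun x ⟨hl, hr⟩ => ⟨?_, ?_⟩⟩
    · calc |(|x - A| - |x - B|)| = |(|x - A| - |B - x|)| := by rw [abs_sub_comm x B]
        _ ≤ |(x - A) - (B - x)| := abs_abs_sub_abs_le_abs_sub _ _
        _ ≤ σ := abs_le.2 ⟨by linarith, by linarith⟩
    · calc σ ≤ |A - B| := h
        _ = |(x - B) - (x - A)| := by ring_nf
        _ ≤ |x - A| + |x - B| := by linarith [abs_sub (x - B) (x - A)]
  · refine ⟨max A B + σ, max A B + σ + 1, by linarith, fun x ⟨hl, _⟩ => ?_⟩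
    have hA : σ < x - A := by linarith [le_max_left A B]
    have hB : σ < x - B := by linarith [le_max_right A B]
    rw [abs_of_pos (hσ.trans hA), abs_of_pos (hσ.trans hB),
      show x - A - (x - B) = -(A - B) by ring, abs_neg]
    constructor <;> linarith

theorem UniversallyRigid.dist_eq {V : Type*} {G : SimpleGraph V} {p : V → ℝ}
    (hp : UniversallyRigid G p) {F : Type*} [NormedAddCommGroup F] [InnerProductSpace ℝ F]
    [FiniteDimensional ℝ F] {q : V → F}
    (hq : ∀ ⦃u w⦄, G.Adj u w → dist (q u) (q w) = dist (p u) (p w)) (u w : V) :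
    dist (q u) (q w) = dist (p u) (p w) := by
  let e := (stdOrthonormalBasis ℝ F).repr
  have hcongr := hp _ (e ∘ q) fun u w huw => by
    simpa only [Function.comp, e.dist_map] using hq huw
  simpa only [Function.comp, e.dist_map] using hcongr u w

theorem not_genUnivRigid_of_neighborSet_subset_singleton {V : Type*} [Finite V]
    {G : SimpleGraph V} {u v w : V} (huv : u ≠ v) (hwu : w ≠ u) (hwv : w ≠ v)
    (hv : G.neighborSet v ⊆ {u}) : ¬ GenUnivRigid G := by
  classical
  intro hG
  obtain ⟨p, hp⟩ := exists_genericConfig V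
  let q := Function.update p v (2 * p u - p v)
  have hqv : ∀ x, G.Adj v x → dist (q v) (q x) = dist (p v) (p x) := by
    intro x hx
    obtain rfl : x = u := hv hx
    simp only [q, Function.update_self, Function.update_of_ne huv, Real.dist_eq]
    rw [show 2 * p x - p v - p x = -(p v - p x) by ring, abs_neg]
  have hq : ∀ ⦃x y⦄, G.Adj x y → dist (q x) (q y) = dist (p x) (p y) := by
    intro x y hxy
    by_cases hx : x = v
    · subst hx; exact hqv y hxy
    by_cases hy : y = v
    · subst hy; rw [dist_comm, dist_comm (p x)]; exact hqv x hxy.symm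
    simp only [q, Function.update_of_ne hx, Function.update_of_ne hy]
  have hvw := (hG p hp).dist_eq hq v w
  simp only [q, Function.update_self, Function.update_of_ne hwv, Real.dist_eq] at hvw
  rcases abs_eq_abs.1 hvw with h | h
  · exact huv (hp.injective (by linarith))
  · exact hwu (hp.injective (by linarith))

theorem GenUnivRigid.two_le_degree {V : Type*} [Fintype V] {G : SimpleGraph V}
    [DecidableRel G.Adj] (hG : GenUnivRigid G) (hV : 3 ≤ Fintype.card V) (v : V) :
    2 ≤ G.degree v := by
  classical
  by_contra! hv
  obtain ⟨u, huv, hu⟩ : ∃ u, u ≠ v ∧ G.neighborSet v ⊆ {u} := by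
    rcases (G.neighborFinset v).eq_empty_or_nonempty with h | ⟨u, hu⟩
    · have : Nontrivial V := Fintype.one_lt_card_iff_nontrivial.1 (by omega)
      obtain ⟨u, hu⟩ := exists_ne v
      refine ⟨u, hu, fun x hx => ?_⟩
      simp [← G.mem_neighborFinset, h] at hx
    · refine ⟨u, (G.ne_of_adj ((G.mem_neighborFinset v u).1 hu)).symm, fun x hx => ?_⟩
      rw [← G.card_neighborFinset_eq_degree, Nat.lt_succ_iff, Finset.card_le_one] at hv
      exact hv x ((G.mem_neighborFinset v x).2 hx) u hu
  obtain ⟨w, -, hw⟩ := Finset.exists_mem_notMem_of_card_lt_card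
    (s := {u, v}) (t := Finset.univ) (Finset.card_le_two.trans_lt (by rw [Finset.card_univ]; omega))
  simp only [Finset.mem_insert, Finset.mem_singleton, not_or] at hw
  exact not_genUnivRigid_of_neighborSet_subset_singleton huv hw.1 hw.2 hu hG

theorem UniversallyRigid.dist_eq_of_induce_compl_singleton {V : Type*} {G : SimpleGraph V}
    {p : V → ℝ} (hp : UniversallyRigid G p) {v : V} {a b : ({v}ᶜ : Set V)}
    (hv : G.neighborSet v ⊆ {(a : V), (b : V)}) {F : Type*} [NormedAddCommGroup F]
    [InnerProductSpace ℝ F] [FiniteDimensional ℝ F] {q : ({v}ᶜ : Set V) → F}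
    (hq : ∀ ⦃w z⦄, (G.induce {v}ᶜ).Adj w z → dist (q w) (q z) = dist (p w) (p z))
    (h₁ : |dist (p v) (p a) - dist (p v) (p b)| ≤ dist (q a) (q b))
    (h₂ : dist (q a) (q b) ≤ dist (p v) (p a) + dist (p v) (p b))
    (w z : ({v}ᶜ : Set V)) : dist (q w) (q z) = dist (p w) (p z) := by
  classical
  obtain ⟨c, hca, hcb⟩ := exists_dist_eq_dist_eq (q a) (q b) h₁ h₂
  let Q : V → WithLp 2 (F × ℝ) := fun x =>
    if hx : x = v then c else WithLp.toLp 2 (q ⟨x, hx⟩, 0)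
  have hQv : Q v = c := dif_pos rfl
  have hQ (x : ({v}ᶜ : Set V)) : Q x = WithLp.toLp 2 (q x, 0) := dif_neg x.2
  have hQQ (x y : ({v}ᶜ : Set V)) : dist (Q x) (Q y) = dist (q x) (q y) := by
    rw [hQ, hQ, ← sq_eq_sq₀ dist_nonneg dist_nonneg, WithLp.dist_toLp_prod_sq, dist_self,
      zero_pow two_ne_zero, add_zero]
  have hQ_star : ∀ x, G.Adj v x → dist (Q v) (Q x) = dist (p v) (p x) := by
    intro x hx
    rcases hv hx with rfl | rfl
    · rw [hQv, hQ, hca]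
    · rw [hQv, hQ, hcb]
  have hQ_adj : ∀ ⦃x y⦄, G.Adj x y → dist (Q x) (Q y) = dist (p x) (p y) := by
    intro x y hxy
    by_cases hx : x = v
    · subst hx; exact hQ_star y hxy
    by_cases hy : y = v
    · subst hy; rw [dist_comm, dist_comm (p x)]; exact hQ_star x hxy.symm
    exact (hQQ ⟨x, hx⟩ ⟨y, hy⟩).trans (hq hxy)
  rw [← hQQ]
  exact hp.dist_eq hQ_adj w z

theorem GenUnivRigid.induce_compl_singleton {V : Type*} [Finite V] {G : SimpleGraph V}
    (hG : GenUnivRigid G) {v : V} {a b : ({v}ᶜ : Set V)}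
    (hv : G.neighborSet v ⊆ {(a : V), (b : V)}) (hab : a ≠ b) : GenUnivRigid (G.induce {v}ᶜ) := by
  intro p' hp' d q' hq'
  -- `y` is equivalent, resp. congruent, to `p'` iff `q'` is, and unlike `q'` it separates `a, b`
  let y : ({v}ᶜ : Set V) → WithLp 2 (EuclideanSpace ℝ (Fin d) × ℝ) :=
    fun w => (√2)⁻¹ • WithLp.toLp 2 (q' w, p' w)
  have hy (w z) :
      dist (y w) (y z) = dist (p' w) (p' z) ↔ dist (q' w) (q' z) = dist (p' w) (p' z) := by
    rw [← sq_eq_sq₀ dist_nonneg dist_nonneg, ← sq_eq_sq₀ dist_nonneg dist_nonneg,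
      dist_smul_toLp_prod_sq]
    constructor <;> intro h <;> linarith
  have hσ : 0 < dist (y a) (y b) := by
    have hpab : 0 < dist (p' a) (p' b) := dist_pos.2 (hp'.injective.ne hab)
    have h := dist_smul_toLp_prod_sq (q' a) (q' b) (p' a) (p' b)
    nlinarith [dist_nonneg (x := y a) (y := y b), sq_nonneg (dist (q' a) (q' b))]
  obtain ⟨l, r, hlr, htri⟩ := exists_Ioo_forall_abs_sub_abs_le_le_add (p' a) (p' b) hσ
  obtain ⟨p, hp, hpv, hpp'⟩ := hp'.exists_extend_mem_Ioo hlr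
  have hcongr := (hG p hp).dist_eq_of_induce_compl_singleton hv (q := y)
    (fun w z hwz => by rw [hpp', hpp', hy]; exact hq' hwz)
    (by simpa only [hpp', Real.dist_eq] using (htri _ hpv).1)
    (by simpa only [hpp', Real.dist_eq] using (htri _ hpv).2)
  intro w z
  rw [← hy, ← hpp', ← hpp']
  exact hcongr w z

theorem SimpleGraph.card_edgeSet_induce_compl_singleton_add_degree {V : Type*} [Fintype V]
    (G : SimpleGraph V) [DecidableRel G.Adj] (v : V) :
    Nat.card (G.induce {v}ᶜ).edgeSet + G.degree v = Nat.card G.edgeSet := by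
  classical
  rw [Nat.card_eq_fintype_card, Nat.card_eq_fintype_card, ← SimpleGraph.edgeFinset_card,
    ← SimpleGraph.edgeFinset_card, G.card_edgeFinset_induce_compl_singleton,
    G.card_edgeFinset_deleteIncidenceSet]
  have := G.degree_le_card_edgeFinset v
  omega

theorem SimpleGraph.sum_degrees_eq_two_mul_card_edgeSet {V : Type*} [Fintype V]
    (G : SimpleGraph V) [DecidableRel G.Adj] :
    ∑ v, G.degree v = 2 * Nat.card G.edgeSet := by
  rw [G.sum_degrees_eq_twice_card_edges, Nat.card_eq_fintype_card, G.edgeFinset_card]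

theorem GenUnivRigid.card_le_card_edgeSet {V : Type*} [Fintype V] {G : SimpleGraph V}
    (hG : GenUnivRigid G) (hV : 3 ≤ Fintype.card V) : Fintype.card V ≤ Nat.card G.edgeSet := by
  classical
  have := Finset.card_nsmul_le_sum Finset.univ (fun v => G.degree v) 2 fun v _ =>
    hG.two_le_degree hV v
  rw [G.sum_degrees_eq_two_mul_card_edgeSet, Finset.card_univ, smul_eq_mul] at this
  omega

theorem GenUnivRigid.exists_degree_eq_two {V : Type*} [Fintype V] {G : SimpleGraph V}
    [DecidableRel G.Adj] (hG : GenUnivRigid G) (hV : 3 ≤ Fintype.card V)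
    (hE : 2 * Nat.card G.edgeSet < 3 * Fintype.card V) : ∃ v, G.degree v = 2 := by
  by_contra! h
  have := Finset.card_nsmul_le_sum Finset.univ (fun v => G.degree v) 3 fun v _ =>
    (hG.two_le_degree hV v).lt_of_ne' (h v)
  rw [G.sum_degrees_eq_two_mul_card_edgeSet, Finset.card_univ, smul_eq_mul] at this
  omega

theorem GenUnivRigid.induce_compl_singleton_of_degree_eq_two {V : Type*} [Fintype V]
    {G : SimpleGraph V} [DecidableRel G.Adj] (hG : GenUnivRigid G) {v : V}
    (hv : G.degree v = 2) : GenUnivRigid (G.induce {v}ᶜ) := by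
  classical
  obtain ⟨a, b, hab, hvab⟩ := Finset.card_eq_two.1 hv
  have hadj {x : V} : G.Adj v x ↔ x = a ∨ x = b := by
    rw [← G.mem_neighborFinset, hvab, Finset.mem_insert, Finset.mem_singleton]
  refine hG.induce_compl_singleton (a := ⟨a, (G.ne_of_adj (hadj.2 (.inl rfl))).symm⟩)
    (b := ⟨b, (G.ne_of_adj (hadj.2 (.inr rfl))).symm⟩) (fun x hx => hadj.1 hx) ?_
  exact fun h => hab (congrArg Subtype.val h)

theorem not_genUnivRigid_of_two_mul_card_edgeSet_lt {V : Type*} [Fintype V] (G : SimpleGraph V)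
    (hV : 3 ≤ Fintype.card V) (hE₁ : 2 * Nat.card G.edgeSet < 3 * Fintype.card V)
    (hE₂ : 2 * Nat.card G.edgeSet + 6 < 4 * Fintype.card V) : ¬ GenUnivRigid G := by
  classical
  induction h : Fintype.card V generalizing V with
  | zero => omega
  | succ n ih =>
    intro hG
    obtain ⟨v, hv⟩ := hG.exists_degree_eq_two hV hE₁
    have hcard : Fintype.card ({v}ᶜ : Set V) = n := by
      rw [Fintype.card_compl_set, h]; simp
    have hedge := G.card_edgeSet_induce_compl_singleton_add_degree v
    have hn := hG.card_le_card_edgeSet hV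
    exact ih (G.induce {v}ᶜ) (by omega) (by omega) (by omega) hcard
      (hG.induce_compl_singleton_of_degree_eq_two hv)

/-- A graph with at least six vertices and fewer than `3|V|/2` edges is not
generically universally rigid in `ℝ¹`. -/
theorem few_edges_not_genUnivRigid {V : Type*} [Fintype V] (G : SimpleGraph V)
    (h6 : 6 ≤ Fintype.card V)
    (hE : 2 * Nat.card G.edgeSet < 3 * Fintype.card V) :
    ¬ GenUnivRigid G :=
  not_genUnivRigid_of_two_mul_card_edgeSet_lt G (by omega) hE (by omega)
end
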